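/- arXiv:2209.09386 — 2 statements merged into one kernel-verified Lean document; each statement's English description precedes it below -/
import Mathlib

section
/- Let β' > β > 0, let s satisfy (β/β')^{1/3} ≤ s ≤ (β'/β)^{1/3}, and set α = √s·√(β'/β). Then for every continuous b : ℝ → ℝ, with b̃_s(y) = √s·b(y/s), and every k ∈ ℕ, the Courant–Fischer min-max values satisfy α·λ_k(β', b̃_s) ≥ λ_k(β, b) in the extended reals. -/
open MeasureTheory ProbabilityTheory Filter

/-- A test function: smooth, compactly supported, vanishing on `(-∞, 0]`. -/
structure IsTestFunction (f : ℝ → ℝ) : Prop where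
  smooth : ContDiff ℝ (⊤ : ℕ∞) f
  compSupp : HasCompactSupport f
  zero_of_nonpos : ∀ x ≤ (0 : ℝ), f x = 0

/-- The Stochastic Airy quadratic form `Q_δ(f, b)`. -/
noncomputable def SAQform (δ : ℝ) (b f : ℝ → ℝ) : ℝ :=
  (∫ x in Set.Ioi (0 : ℝ), (deriv f x ^ 2 + x * f x ^ 2)) -
    (4 / Real.sqrt δ) * ∫ x in Set.Ioi (0 : ℝ), f x * deriv f x * b x

/-- The ground-state value `Λ(δ, b)` as an extended real. -/
noncomputable def SAOgroundState (δ : ℝ) (b : ℝ → ℝ) : EReal :=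
  sInf {x : EReal | ∃ f : ℝ → ℝ, IsTestFunction f ∧
    (∫ t in Set.Ioi (0 : ℝ), f t ^ 2) = 1 ∧ x = (SAQform δ b f : EReal)}

/-- A standard one-dimensional Brownian motion on `[0, ∞)`. -/
structure IsStandardBrownianMotion {Ω : Type*} [MeasurableSpace Ω]
    (μ : Measure Ω) (B : Ω → ℝ → ℝ) : Prop where
  meas : ∀ t : ℝ, Measurable fun ω => B ω t
  start : ∀ᵐ ω ∂μ, B ω 0 = 0
  cont : ∀ᵐ ω ∂μ, Continuous (B ω)
  gauss_incr : ∀ s t : ℝ, 0 ≤ s → s < t →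
    μ.map (fun ω => B ω t - B ω s) = gaussianReal 0 (Real.toNNReal (t - s))
  indep_incr : ∀ (n : ℕ) (t : ℕ → ℝ), Monotone t → 0 ≤ t 0 →
    iIndepFun
      (fun i : Fin n => fun ω => B ω (t (i + 1)) - B ω (t i)) μ

/-- The real vector space of test functions, as a submodule of `ℝ → ℝ`. -/
def testFunctionSpace : Submodule ℝ (ℝ → ℝ) where
  carrier := {f | IsTestFunction f}
  add_mem' := fun hf hg =>
    ⟨hf.smooth.add hg.smooth, hf.compSupp.add hg.compSupp,
      fun x hx => by simp [Pi.add_apply, hf.zero_of_nonpos x hx, hg.zero_of_nonpos x hx]⟩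
  zero_mem' :=
    ⟨contDiff_const, by simpa using HasCompactSupport.zero (α := ℝ) (β := ℝ), fun x _ => rfl⟩
  smul_mem' := fun c f hf =>
    ⟨hf.smooth.const_smul c, hf.compSupp.mono (Function.support_const_smul_subset c f),
      fun x hx => by simp [Pi.smul_apply, hf.zero_of_nonpos x hx]⟩

/-- The `k`-th Courant–Fischer min-max value `λ_k(δ, b)` of the Stochastic Airy form:
the infimum over all `(k+1)`-dimensional subspaces `V` of the space of test functions of
the supremum of `Q_δ(f, b)` over `L²`-normalized `f ∈ V`, taken in the extended reals. -/
noncomputable def SAOminmax (δ : ℝ) (b : ℝ → ℝ) (k : ℕ) : EReal :=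
  sInf {x : EReal | ∃ V : Submodule ℝ (ℝ → ℝ), V ≤ testFunctionSpace ∧
    Module.finrank ℝ V = k + 1 ∧
    x = sSup {y : EReal | ∃ f ∈ V,
      (∫ t in Set.Ioi (0 : ℝ), f t ^ 2) = 1 ∧ y = (SAQform δ b f : EReal)}}

/- ### Auxiliary material -/

private lemma SAO_hcs_aux {φ g : ℝ → ℝ} (hφ : HasCompactSupport φ)
    (h : ∀ u, φ u = 0 → g u = 0) : HasCompactSupport g :=
  hφ.mono (fun u hu h0 => hu (h u h0))

private lemma SAO_deriv_scale {s : ℝ} (f : ℝ → ℝ) (hf : ContDiff ℝ (⊤ : ℕ∞) f) (x : ℝ) :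
    deriv (fun x => Real.sqrt s * f (s * x)) x = Real.sqrt s * (s * deriv f (s * x)) := by
  have h1 : HasDerivAt (fun x => f (s * x)) (deriv f (s * x) * (s * 1)) x :=
    ((hf.differentiable (by simp) (s * x)).hasDerivAt).comp x ((hasDerivAt_id x).const_mul s)
  rw [deriv_const_mul_field, h1.deriv]; ring

/-- The scaling linear map `f ↦ √s · f(s·)`. -/
noncomputable def SAOscaleMap (s : ℝ) : (ℝ → ℝ) →ₗ[ℝ] (ℝ → ℝ) where
  toFun f := fun x => Real.sqrt s * f (s * x)
  map_add' f g := by funext x; simp [mul_add]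
  map_smul' c f := by funext x; simp [Pi.smul_apply, smul_eq_mul]; ring

lemma SAOscaleMap_apply (s : ℝ) (f : ℝ → ℝ) :
    SAOscaleMap s f = fun x => Real.sqrt s * f (s * x) := rfl

lemma SAOscaleMap_inj {s : ℝ} (hs : 0 < s) : Function.Injective (SAOscaleMap s) := by
  intro f g h
  funext u
  have h2 := congrFun h (u / s)
  simp only [SAOscaleMap_apply] at h2
  have h3 : s * (u / s) = u := by field_simp
  rw [h3] at h2
  have hss : Real.sqrt s ≠ 0 := by positivity
  exact mul_left_cancel₀ hss h2

lemma SAOscaleMap_test {s : ℝ} (hs : 0 < s) {f : ℝ → ℝ} (hf : IsTestFunction f) :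
    IsTestFunction (SAOscaleMap s f) := by
  rw [SAOscaleMap_apply]
  refine ⟨contDiff_const.mul (hf.smooth.comp (contDiff_const.mul contDiff_id)), ?_, ?_⟩
  · have h1 : HasCompactSupport (f ∘ (Homeomorph.mulLeft₀ s hs.ne')) :=
      hf.compSupp.comp_homeomorph _
    exact SAO_hcs_aux h1 (fun u hu => by
      simp only [Function.comp_apply, Homeomorph.coe_mulLeft₀] at hu
      simp [hu])
  · intro x hx
    have : s * x ≤ 0 := mul_nonpos_iff.mpr (Or.inl ⟨hs.le, hx⟩)
    simp [hf.zero_of_nonpos _ this]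

private lemma SAO_norm_scale {s : ℝ} (hs : 0 < s) (f : ℝ → ℝ) :
    (∫ x in Set.Ioi (0:ℝ), (Real.sqrt s * f (s * x)) ^ 2) = ∫ t in Set.Ioi (0:ℝ), f t ^ 2 := by
  have h := integral_comp_mul_left_Ioi (fun u => s * f u ^ 2) 0 hs
  simp only [mul_zero] at h
  calc (∫ x in Set.Ioi (0:ℝ), (Real.sqrt s * f (s * x)) ^ 2)
      = ∫ x in Set.Ioi (0:ℝ), (fun u => s * f u ^ 2) (s * x) := by
        congr 1; ext x; simp [mul_pow, Real.sq_sqrt hs.le]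
    _ = s⁻¹ • ∫ u in Set.Ioi (0:ℝ), s * f u ^ 2 := h
    _ = ∫ u in Set.Ioi (0:ℝ), f u ^ 2 := by
        rw [MeasureTheory.integral_const_mul, smul_eq_mul, ← mul_assoc,
          inv_mul_cancel₀ hs.ne', one_mul]

/-- The key pointwise comparison of the quadratic forms. -/
private lemma SAO_key {β β' s α : ℝ} (hs : 0 < s) (hβ : 0 < β) (hβ' : 0 < β')
    (hs2α : s ^ 2 ≤ α) (hsiα : s⁻¹ ≤ α)
    (hcross : α * (4 / Real.sqrt β') * Real.sqrt s = 4 / Real.sqrt β * s)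
    (b : ℝ → ℝ) (hb : Continuous b) (f : ℝ → ℝ) (hf : IsTestFunction f) :
    SAQform β b (SAOscaleMap s f) ≤
      α * SAQform β' (fun y => Real.sqrt s * b (y / s)) f := by
  have hfc : Continuous f := hf.smooth.continuous
  have hfc' : Continuous (deriv f) := hf.smooth.continuous_deriv (by simp)
  set A := ∫ u in Set.Ioi (0:ℝ), deriv f u ^ 2 with hA
  set B := ∫ u in Set.Ioi (0:ℝ), u * f u ^ 2 with hB
  set D := ∫ u in Set.Ioi (0:ℝ), f u * deriv f u * b (u / s) with hD
  -- integrability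
  have intA : IntegrableOn (fun u => deriv f u ^ 2) (Set.Ioi (0:ℝ)) :=
    ((hfc'.pow 2).integrable_of_hasCompactSupport
      (SAO_hcs_aux hf.compSupp.deriv (fun u hu => by simp [hu]))).integrableOn
  have intB : IntegrableOn (fun u => u * f u ^ 2) (Set.Ioi (0:ℝ)) :=
    ((continuous_id.mul (hfc.pow 2)).integrable_of_hasCompactSupport
      (SAO_hcs_aux hf.compSupp (fun u hu => by simp [hu]))).integrableOn
  have intD : IntegrableOn (fun u => f u * deriv f u * b (u / s)) (Set.Ioi (0:ℝ)) :=
    (((hfc.mul hfc').mul (hb.comp (continuous_id.div_const s))).integrable_of_hasCompactSupport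
      (SAO_hcs_aux hf.compSupp (fun u hu => by simp [hu]))).integrableOn
  -- nonnegativity
  have hA0 : 0 ≤ A := setIntegral_nonneg measurableSet_Ioi (fun u _ => sq_nonneg _)
  have hB0 : 0 ≤ B := setIntegral_nonneg measurableSet_Ioi
    (fun u hu => mul_nonneg (le_of_lt hu) (sq_nonneg _))
  -- first integral for the scaled function
  have hss : Real.sqrt s * Real.sqrt s = s := Real.mul_self_sqrt hs.le
  have hI1 : (∫ x in Set.Ioi (0:ℝ),
      (deriv (SAOscaleMap s f) x ^ 2 + x * (SAOscaleMap s f) x ^ 2))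
      = s ^ 2 * A + s⁻¹ * B := by
    have h := integral_comp_mul_left_Ioi
      (fun u => s ^ 3 * deriv f u ^ 2 + u * f u ^ 2) 0 hs
    simp only [mul_zero] at h
    calc (∫ x in Set.Ioi (0:ℝ),
        (deriv (SAOscaleMap s f) x ^ 2 + x * (SAOscaleMap s f) x ^ 2))
        = ∫ x in Set.Ioi (0:ℝ),
          (fun u => s ^ 3 * deriv f u ^ 2 + u * f u ^ 2) (s * x) := by
          congr 1; ext x
          rw [SAOscaleMap_apply, SAO_deriv_scale f hf.smooth]
          simp only
          ring_nf
          rw [Real.sq_sqrt hs.le]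
          ring
      _ = s⁻¹ • ∫ u in Set.Ioi (0:ℝ), (s ^ 3 * deriv f u ^ 2 + u * f u ^ 2) := h
      _ = s⁻¹ * (s ^ 3 * A + B) := by
          rw [integral_add (intA.const_mul _) intB, MeasureTheory.integral_const_mul,
            smul_eq_mul]
      _ = s ^ 2 * A + s⁻¹ * B := by field_simp
  -- cross integral for the scaled function
  have hI2 : (∫ x in Set.Ioi (0:ℝ),
      (SAOscaleMap s f) x * deriv (SAOscaleMap s f) x * b x) = s * D := by
    have h := integral_comp_mul_left_Ioi
      (fun u => s ^ 2 * (f u * deriv f u * b (u / s))) 0 hs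
    simp only [mul_zero] at h
    calc (∫ x in Set.Ioi (0:ℝ), (SAOscaleMap s f) x * deriv (SAOscaleMap s f) x * b x)
        = ∫ x in Set.Ioi (0:ℝ),
          (fun u => s ^ 2 * (f u * deriv f u * b (u / s))) (s * x) := by
          congr 1; ext x
          rw [SAOscaleMap_apply, SAO_deriv_scale f hf.smooth]
          simp only
          rw [mul_div_cancel_left₀ x hs.ne']
          ring_nf
          rw [Real.sq_sqrt hs.le]
          ring
      _ = s⁻¹ • ∫ u in Set.Ioi (0:ℝ), s ^ 2 * (f u * deriv f u * b (u / s)) := h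
      _ = s * D := by
          rw [MeasureTheory.integral_const_mul, smul_eq_mul, ← hD, ← mul_assoc]
          congr 1
          field_simp
  -- right-hand side integrals
  have hI3 : (∫ x in Set.Ioi (0:ℝ), (deriv f x ^ 2 + x * f x ^ 2)) = A + B :=
    integral_add intA intB
  have hI4 : (∫ x in Set.Ioi (0:ℝ),
      f x * deriv f x * (Real.sqrt s * b (x / s))) = Real.sqrt s * D := by
    rw [hD, ← MeasureTheory.integral_const_mul]
    congr 1; ext x; ring
  rw [SAQform, SAQform, hI1, hI2, hI3, hI4]
  have hrw : α * (A + B - 4 / Real.sqrt β' * (Real.sqrt s * D))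
      = α * A + α * B - 4 / Real.sqrt β * (s * D) := by
    have : α * (4 / Real.sqrt β') * Real.sqrt s * D = 4 / Real.sqrt β * (s * D) := by
      rw [hcross]; ring
    nlinarith [this]
  rw [hrw]
  have h1 : s ^ 2 * A ≤ α * A := mul_le_mul_of_nonneg_right hs2α hA0
  have h2 : s⁻¹ * B ≤ α * B := mul_le_mul_of_nonneg_right hsiα hB0
  linarith

/-- For `β' > β > 0`, `(β/β')^(1/3) ≤ s ≤ (β'/β)^(1/3)` and
`α = √s·√(β'/β)`, for every continuous `b` and every `k ∈ ℕ`, the Courant–Fischer min-max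
values satisfy `α·λ_k(β', b̃_s) ≥ λ_k(β, b)` in the extended reals. -/
theorem SAOminmax_rescaled_comparison
    (β β' s α : ℝ) (hβ : 0 < β) (hββ' : β < β')
    (hs₁ : (β / β') ^ ((1 : ℝ) / 3) ≤ s) (hs₂ : s ≤ (β' / β) ^ ((1 : ℝ) / 3))
    (hα : α = Real.sqrt s * Real.sqrt (β' / β))
    (b : ℝ → ℝ) (hb : Continuous b) (k : ℕ) :
    SAOminmax β b k ≤
      (α : ℝ) * SAOminmax β' (fun y => Real.sqrt s * b (y / s)) k := by
  have hβ' : 0 < β' := hβ.trans hββ'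
  have hsp : 0 < s :=
    lt_of_lt_of_le (Real.rpow_pos_of_pos (div_pos hβ hβ') _) hs₁
  -- cube bounds
  have hpow : ∀ x : ℝ, 0 ≤ x → (x ^ ((1:ℝ)/3)) ^ (3:ℕ) = x := by
    intro x hx
    rw [← Real.rpow_natCast (x ^ ((1:ℝ)/3)) 3, ← Real.rpow_mul hx]
    norm_num
  have hcube_hi : s ^ (3:ℕ) ≤ β' / β := by
    have := pow_le_pow_left₀ hsp.le hs₂ 3
    rwa [hpow _ (by positivity)] at this
  have hcube_lo : β / β' ≤ s ^ (3:ℕ) := by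
    have := pow_le_pow_left₀ (by positivity : (0:ℝ) ≤ (β / β') ^ ((1:ℝ)/3)) hs₁ 3
    rwa [hpow _ (by positivity)] at this
  have hα2 : α ^ 2 = s * (β' / β) := by
    rw [hα, mul_pow, Real.sq_sqrt hsp.le, Real.sq_sqrt (by positivity)]
  have hαpos : 0 < α := by
    rw [hα]
    have := Real.sqrt_pos.mpr hsp
    have := Real.sqrt_pos.mpr (div_pos hβ' hβ)
    positivity
  have hs2α : s ^ 2 ≤ α := by nlinarith [hα2, hcube_hi, hαpos, hsp, sq_nonneg (s^2 - α)]
  have hsiα : s⁻¹ ≤ α := by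
    have h1 : 1 ≤ (s * α) ^ 2 := by
      have : (s * α) ^ 2 = s ^ 3 * (β' / β) := by rw [mul_pow, hα2]; ring
      rw [this]
      calc (1:ℝ) = (β / β') * (β' / β) := by field_simp
        _ ≤ s ^ 3 * (β' / β) := by
            apply mul_le_mul_of_nonneg_right hcube_lo (by positivity)
    have h2 : 1 ≤ s * α := by nlinarith [mul_pos hsp hαpos]
    have h3 : s * s⁻¹ = 1 := mul_inv_cancel₀ hsp.ne'
    nlinarith
  have hcross : α * (4 / Real.sqrt β') * Real.sqrt s = 4 / Real.sqrt β * s := by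
    have hbq : (0:ℝ) < Real.sqrt β := Real.sqrt_pos.mpr hβ
    have hbq' : (0:ℝ) < Real.sqrt β' := Real.sqrt_pos.mpr hβ'
    have hss : Real.sqrt s * Real.sqrt s = s := Real.mul_self_sqrt hsp.le
    have hd : Real.sqrt (β' / β) = Real.sqrt β' / Real.sqrt β := Real.sqrt_div hβ'.le β
    rw [hα, hd]
    field_simp
    linear_combination hss
  -- EReal bookkeeping
  have hα0 : (0 : EReal) < ((α : ℝ) : EReal) := EReal.coe_pos.mpr hαpos
  have hαtop : ((α : ℝ) : EReal) ≠ ⊤ := EReal.coe_ne_top _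
  rw [SAOminmax, ← EReal.div_le_iff_le_mul hα0 hαtop]
  apply le_sInf
  rintro x ⟨V', hV'le, hV'rank, rfl⟩
  rw [EReal.div_le_iff_le_mul hα0 hαtop]
  set T := SAOscaleMap s with hT
  have hTinj : Function.Injective T := SAOscaleMap_inj hsp
  have hmaple : V'.map T ≤ testFunctionSpace := by
    rintro g ⟨f, hf, rfl⟩
    exact SAOscaleMap_test hsp (hV'le hf)
  have hrank : Module.finrank ℝ (V'.map T) = k + 1 := by
    rw [← hV'rank]
    exact (LinearEquiv.finrank_eq (Submodule.equivMapOfInjective T hTinj V')).symm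
  refine le_trans (sInf_le ⟨V'.map T, hmaple, hrank, rfl⟩) ?_
  apply sSup_le
  rintro y ⟨g, hgV, hgnorm, rfl⟩
  obtain ⟨f, hfV', rfl⟩ := Submodule.mem_map.mp hgV
  have hft : IsTestFunction f := hV'le hfV'
  have hnorm' : (∫ t in Set.Ioi (0:ℝ), f t ^ 2) = 1 := by
    rw [← SAO_norm_scale hsp f]
    exact hgnorm
  have hQ : SAQform β b (T f) ≤ α * SAQform β' (fun y => Real.sqrt s * b (y / s)) f :=
    SAO_key hsp hβ hβ' hs2α hsiα hcross b hb f hft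
  calc ((SAQform β b (T f) : ℝ) : EReal)
      ≤ ((α * SAQform β' (fun y => Real.sqrt s * b (y / s)) f : ℝ) : EReal) :=
        EReal.coe_le_coe_iff.mpr hQ
    _ = ((α : ℝ) : EReal) * ((SAQform β' (fun y => Real.sqrt s * b (y / s)) f : ℝ) : EReal) :=
        EReal.coe_mul _ _
    _ ≤ ((α : ℝ) : EReal) * sSup {y : EReal | ∃ f ∈ V',
          (∫ t in Set.Ioi (0:ℝ), f t ^ 2) = 1 ∧
          y = (SAQform β' (fun y => Real.sqrt s * b (y / s)) f : EReal)} :=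
        mul_le_mul_of_nonneg_left (le_sSup ⟨f, hfV', hnorm', rfl⟩) (le_of_lt hα0)
end

section
/- Let N be a positive integer and let w : ℤ × ℤ → ℝ be a weight function that is symmetric under reflection across the anti-diagonal, i.e. w(i, j) = w(−j, −i) for all (i, j). Then the maximum, over all up/right lattice paths π from (−N, 0) to (0, N), of the total weight Σ_{(i,j) ∈ π} w(i, j) equals the maximum over i ∈ {−N, −N+1, …, 0} of (2·M(i) − w(i, −i)), where M(i) is the maximum total weight of an up/right lattice path from (−N, 0) to (i, −i). -/
/-- An up/right lattice path from `p` to `q` in `ℤ²`: a finite sequence of lattice points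
starting at `p` and ending at `q` in which each consecutive step increases exactly one
coordinate by `1`. -/
def IsUpRightPath (p q : ℤ × ℤ) (π : List (ℤ × ℤ)) : Prop :=
  π.head? = some p ∧ π.getLast? = some q ∧
    π.Chain' fun u v : ℤ × ℤ => v = (u.1 + 1, u.2) ∨ v = (u.1, u.2 + 1)

namespace LPPAux

abbrev Step (u v : ℤ × ℤ) : Prop := v = (u.1 + 1, u.2) ∨ v = (u.1, u.2 + 1)

def reflect (p : ℤ × ℤ) : ℤ × ℤ := (-p.2, -p.1)

lemma step_reflect {u v : ℤ × ℤ} (h : Step u v) : Step (reflect v) (reflect u) := by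
  rcases h with h | h <;> subst h <;> [right; left] <;> simp [reflect, Prod.ext_iff]

lemma reflect_path {p q : ℤ × ℤ} {π : List (ℤ × ℤ)} (h : IsUpRightPath p q π) :
    IsUpRightPath (reflect q) (reflect p) ((π.map reflect).reverse) := by
  obtain ⟨h1, h2, h3⟩ := h
  refine ⟨?_, ?_, ?_⟩
  · rw [List.head?_reverse, List.getLast?_map, h2]; rfl
  · rw [List.getLast?_reverse, List.head?_map, h1]; rfl
  · rw [List.Chain', List.isChain_reverse, List.isChain_map]
    exact h3.imp fun a b h => step_reflect h

lemma reflect_sum (w : ℤ × ℤ → ℝ) (hw : ∀ u, w (reflect u) = w u) (π : List (ℤ × ℤ)) :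
    (((π.map reflect).reverse).map w).sum = (π.map w).sum := by
  rw [List.map_reverse, List.sum_reverse, List.map_map]
  congr 1
  exact List.map_congr_left fun x _ => hw x

lemma head?_append_left {α : Type*} {l l' : List α} {a : α} (h : l.head? = some a) :
    (l ++ l').head? = some a := by cases l <;> simp_all

lemma getLast?_cons_of_ne {α : Type*} {a : α} {l : List α} (h : l ≠ []) :
    (a :: l).getLast? = l.getLast? := by
  cases l with
  | nil => exact absurd rfl h
  | cons b t => exact List.getLast?_cons_cons ..

lemma getLast?_append_right {α : Type*} {l l' : List α} {a : α} (h : l'.getLast? = some a) :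
    (l ++ l').getLast? = some a := by
  rw [List.getLast?_append_of_ne_nil, h]
  intro hnil; subst hnil; simp at h

lemma glue {p m q : ℤ × ℤ} {σ τ : List (ℤ × ℤ)} (hσ : IsUpRightPath p m σ)
    (hτ : IsUpRightPath m q τ) :
    IsUpRightPath p q (σ ++ τ.tail) ∧
      ∀ f : ℤ × ℤ → ℝ, ((σ ++ τ.tail).map f).sum = (σ.map f).sum + (τ.map f).sum - f m := by
  obtain ⟨hσ1, hσ2, hσ3⟩ := hσ
  obtain ⟨hτ1, hτ2, hτ3⟩ := hτ
  obtain ⟨t, rfl⟩ : ∃ t, τ = m :: t := by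
    cases τ with
    | nil => simp at hτ1
    | cons a t => simp at hτ1; exact ⟨t, by rw [hτ1]⟩
  rw [List.Chain', List.isChain_cons] at hτ3
  cases t with
  | nil =>
    have hqm : q = m := by simpa using hτ2.symm
    refine ⟨?_, fun f => by simp⟩
    show IsUpRightPath p q (σ ++ [])
    rw [List.append_nil]
    exact ⟨hσ1, by rw [hσ2, hqm], hσ3⟩
  | cons b t' =>
    constructor
    · refine ⟨head?_append_left hσ1, getLast?_append_right (by simpa using hτ2), ?_⟩
      refine List.IsChain.append hσ3 hτ3.2 ?_
      intro x hx y hy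
      rw [hσ2] at hx
      simp at hx hy
      subst hx; subst hy
      exact hτ3.1 b rfl
    · intro f
      simp only [List.map_append, List.sum_append, List.tail_cons, List.map_cons, List.sum_cons]
      ring

lemma mono : ∀ (π : List (ℤ × ℤ)) (p q : ℤ × ℤ), IsUpRightPath p q π →
    p.1 ≤ q.1 ∧ p.2 ≤ q.2 := by
  intro π
  induction π with
  | nil => intro p q h; exact absurd h.1 (by simp)
  | cons a l ih =>
    intro p q h
    obtain ⟨h1, h2, h3⟩ := h
    have hap : a = p := by simpa using h1
    subst hap
    cases l with
    | nil =>
      have : a = q := by simpa using h2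
      subst this; exact ⟨le_refl _, le_refl _⟩
    | cons b t =>
      rw [List.Chain', List.isChain_cons_cons] at h3
      have hb := ih b q ⟨rfl, by simpa using h2, h3.2⟩
      rcases h3.1 with hs | hs <;> subst hs <;> simp at hb ⊢ <;> omega

lemma mem_box : ∀ (π : List (ℤ × ℤ)) (p q : ℤ × ℤ), IsUpRightPath p q π →
    ∀ x ∈ π, p.1 ≤ x.1 ∧ x.1 ≤ q.1 ∧ p.2 ≤ x.2 ∧ x.2 ≤ q.2 := by
  intro π
  induction π with
  | nil => intro p q h; exact absurd h.1 (by simp)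
  | cons a l ih =>
    intro p q h x hx
    obtain ⟨h1, h2, h3⟩ := h
    have hap : a = p := by simpa using h1
    subst hap
    rcases List.mem_cons.mp hx with rfl | hx'
    · have := mono (x :: l) x q ⟨rfl, h2, h3⟩
      exact ⟨le_refl _, this.1, le_refl _, this.2⟩
    · cases l with
      | nil => simp at hx'
      | cons b t =>
        rw [List.Chain', List.isChain_cons_cons] at h3
        have hb := ih b q ⟨rfl, by simpa using h2, h3.2⟩ x hx'
        rcases h3.1 with hs | hs <;> subst hs <;> simp at hb <;>
          exact ⟨by omega, hb.2.1, by omega, hb.2.2.2⟩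

lemma length_le : ∀ (π : List (ℤ × ℤ)) (p q : ℤ × ℤ), IsUpRightPath p q π →
    (π.length : ℤ) ≤ q.1 + q.2 - p.1 - p.2 + 1 := by
  intro π
  induction π with
  | nil => intro p q h; exact absurd h.1 (by simp)
  | cons a l ih =>
    intro p q h
    obtain ⟨h1, h2, h3⟩ := h
    have hap : a = p := by simpa using h1
    subst hap
    cases l with
    | nil =>
      have : a = q := by simpa using h2
      subst this; simp
    | cons b t =>
      rw [List.Chain', List.isChain_cons_cons] at h3
      have hb := ih b q ⟨rfl, by simpa using h2, h3.2⟩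
      rcases h3.1 with hs | hs <;> subst hs <;> simp at hb ⊢ <;> omega

lemma finite_lists {α : Type*} {s : Set α} (hs : s.Finite) :
    ∀ n : ℕ, {l : List α | l.length ≤ n ∧ ∀ x ∈ l, x ∈ s}.Finite := by
  intro n
  induction n with
  | zero =>
    refine Set.Finite.subset (Set.finite_singleton []) ?_
    intro l hl
    simp only [Set.mem_singleton_iff]
    exact List.length_eq_zero_iff.mp (Nat.le_zero.mp hl.1)
  | succ n ihn =>
    refine Set.Finite.subset ((hs.image2 List.cons ihn).insert []) ?_
    intro l hl
    cases l with
    | nil => exact Set.mem_insert _ _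
    | cons a t =>
      refine Set.mem_insert_iff.mpr (Or.inr ?_)
      refine Set.mem_image2.mpr ⟨a, hl.2 a (by simp), t, ⟨?_, fun x hx => hl.2 x (by simp [hx])⟩, rfl⟩
      have := hl.1
      simp only [List.length_cons] at this
      omega

lemma finite_paths (p q : ℤ × ℤ) : {π | IsUpRightPath p q π}.Finite := by
  refine Set.Finite.subset
    (finite_lists (s := Set.Icc p q) (Set.finite_Icc p q) (q.1 + q.2 - p.1 - p.2 + 1).toNat) ?_
  intro π hπ
  constructor
  · have := length_le π p q hπ; omega
  · intro x hx
    have := mem_box π p q hπ x hx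
    rw [Set.mem_Icc]
    exact ⟨⟨this.1, this.2.2.1⟩, ⟨this.2.1, this.2.2.2⟩⟩


def rpath : ℤ × ℤ → ℕ → List (ℤ × ℤ)
  | p, 0 => [p]
  | p, n + 1 => p :: rpath (p.1 + 1, p.2) n

def upath : ℤ × ℤ → ℕ → List (ℤ × ℤ)
  | p, 0 => [p]
  | p, n + 1 => p :: upath (p.1, p.2 + 1) n

lemma rpath_head : ∀ (n : ℕ) (p : ℤ × ℤ), (rpath p n).head? = some p
  | 0, p => rfl
  | n + 1, p => rfl

lemma upath_head : ∀ (n : ℕ) (p : ℤ × ℤ), (upath p n).head? = some p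
  | 0, p => rfl
  | n + 1, p => rfl

lemma rpath_ne : ∀ (n : ℕ) (p : ℤ × ℤ), rpath p n ≠ []
  | 0, p => by simp [rpath]
  | n + 1, p => by simp [rpath]

lemma upath_ne : ∀ (n : ℕ) (p : ℤ × ℤ), upath p n ≠ []
  | 0, p => by simp [upath]
  | n + 1, p => by simp [upath]

lemma rpath_spec : ∀ (n : ℕ) (p : ℤ × ℤ), IsUpRightPath p (p.1 + n, p.2) (rpath p n) := by
  intro n
  induction n with
  | zero => intro p; exact ⟨rfl, by simp [rpath], List.isChain_singleton p⟩
  | succ n ih =>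
    intro p
    have h := ih (p.1 + 1, p.2)
    refine ⟨rfl, ?_, ?_⟩
    · rw [show rpath p (n + 1) = p :: rpath (p.1 + 1, p.2) n from rfl,
        getLast?_cons_of_ne (rpath_ne _ _), h.2.1]
      congr 2
      push_cast; ring
    · rw [show rpath p (n + 1) = p :: rpath (p.1 + 1, p.2) n from rfl, List.Chain', List.isChain_cons]
      refine ⟨?_, h.2.2⟩
      intro y hy
      rw [rpath_head] at hy
      cases hy
      exact Or.inl rfl

lemma upath_spec : ∀ (n : ℕ) (p : ℤ × ℤ), IsUpRightPath p (p.1, p.2 + n) (upath p n) := by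
  intro n
  induction n with
  | zero => intro p; exact ⟨rfl, by simp [upath], List.isChain_singleton p⟩
  | succ n ih =>
    intro p
    have h := ih (p.1, p.2 + 1)
    refine ⟨rfl, ?_, ?_⟩
    · rw [show upath p (n + 1) = p :: upath (p.1, p.2 + 1) n from rfl,
        getLast?_cons_of_ne (upath_ne _ _), h.2.1]
      congr 2
      push_cast; ring
    · rw [show upath p (n + 1) = p :: upath (p.1, p.2 + 1) n from rfl, List.Chain', List.isChain_cons]
      refine ⟨?_, h.2.2⟩
      intro y hy
      rw [upath_head] at hy
      cases hy
      exact Or.inr rfl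

lemma exists_path (p q : ℤ × ℤ) (h1 : p.1 ≤ q.1) (h2 : p.2 ≤ q.2) :
    ∃ π, IsUpRightPath p q π := by
  have hr := rpath_spec (q.1 - p.1).toNat p
  have hu := upath_spec (q.2 - p.2).toNat (q.1, p.2)
  have e1 : (p.1 + ((q.1 - p.1).toNat : ℤ), p.2) = (q.1, p.2) := by
    rw [Int.toNat_of_nonneg (by omega)]
    have : p.1 + (q.1 - p.1) = q.1 := by ring
    rw [this]
  have e2 : ((q.1 : ℤ), p.2 + ((q.2 - p.2).toNat : ℤ)) = q := by
    rw [Int.toNat_of_nonneg (by omega)]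
    have : p.2 + (q.2 - p.2) = q.2 := by ring
    rw [this]
  rw [e1] at hr
  rw [show ((q.1, p.2) : ℤ × ℤ).1 = q.1 from rfl, show ((q.1, p.2) : ℤ × ℤ).2 = p.2 from rfl,
    e2] at hu
  exact ⟨_, (glue hr hu).1⟩

lemma split (f : ℤ × ℤ → ℝ) : ∀ (π : List (ℤ × ℤ)) (p q : ℤ × ℤ), IsUpRightPath p q π →
    p.1 + p.2 ≤ 0 → 0 ≤ q.1 + q.2 →
    ∃ i σ τ, p.1 ≤ i ∧ i ≤ q.1 ∧ IsUpRightPath p (i, -i) σ ∧ IsUpRightPath (i, -i) q τ ∧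
      (π.map f).sum = (σ.map f).sum + (τ.map f).sum - f (i, -i) := by
  intro π
  induction π with
  | nil => intro p q h; exact absurd h.1 (by simp)
  | cons a l ih =>
    intro p q h hp hq
    have hap : a = p := by simpa using h.1
    subst hap
    by_cases h0 : a.1 + a.2 = 0
    · have hpe : ((a.1, -a.1) : ℤ × ℤ) = a := by ext <;> simp <;> omega
      have hm := mono (a :: l) a q h
      refine ⟨a.1, [a], a :: l, le_refl _, hm.1, ?_, ?_, ?_⟩
      · rw [hpe]; exact ⟨rfl, rfl, List.isChain_singleton a⟩
      · rw [hpe]; exact h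
      · rw [hpe]; simp only [List.map_cons, List.map_nil, List.sum_cons, List.sum_nil]; ring
    · have h0' : a.1 + a.2 < 0 := lt_of_le_of_ne hp h0
      cases l with
      | nil =>
        have : a = q := by simpa using h.2.1
        subst this; omega
      | cons b t =>
        have hchain := h.2.2
        rw [List.Chain', List.isChain_cons_cons] at hchain
        have hb : IsUpRightPath b q (b :: t) := ⟨rfl, by simpa using h.2.1, hchain.2⟩
        have hbsum : b.1 + b.2 = a.1 + a.2 + 1 := by
          rcases hchain.1 with hs | hs <;> subst hs <;> simp <;> try ring
        obtain ⟨i, σ, τ, hi1, hi2, hσ, hτ, hsum⟩ := ih b q hb (by omega) hq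
        obtain ⟨s, rfl⟩ : ∃ s, σ = b :: s := by
          have := hσ.1
          cases σ with
          | nil => simp at this
          | cons c s => simp at this; exact ⟨s, by rw [this]⟩
        have hi0 : a.1 ≤ i := by
          have : a.1 ≤ b.1 := by rcases hchain.1 with hs | hs <;> subst hs <;> simp
          omega
        refine ⟨i, a :: b :: s, τ, hi0, hi2, ?_, hτ, ?_⟩
        · exact ⟨rfl, by rw [getLast?_cons_of_ne (by simp)]; exact hσ.2.1,
            List.isChain_cons_cons.mpr ⟨hchain.1, hσ.2.2⟩⟩
        · simp only [List.map_cons, List.sum_cons] at hsum ⊢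
          linarith

end LPPAux

/-- For a weight function `w` symmetric under reflection across the
anti-diagonal (`w(i,j) = w(−j,−i)`), the maximal total weight of an up/right path from
`(−N, 0)` to `(0, N)` equals the maximum over `−N ≤ i ≤ 0` of `2·M(i) − w(i, −i)`, where
`M(i)` is the maximal total weight of an up/right path from `(−N, 0)` to `(i, −i)`. -/
theorem antidiagonal_symmetric_last_passage (N : ℕ) (hN : 0 < N) (w : ℤ × ℤ → ℝ)
    (hw : ∀ i j : ℤ, w (i, j) = w (-j, -i)) :
    sSup {x : ℝ | ∃ π : List (ℤ × ℤ),
        IsUpRightPath (-(N : ℤ), 0) (0, (N : ℤ)) π ∧ x = (π.map w).sum} =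
      sSup {x : ℝ | ∃ i : ℤ, -(N : ℤ) ≤ i ∧ i ≤ 0 ∧
        x = 2 * sSup {y : ℝ | ∃ π : List (ℤ × ℤ),
            IsUpRightPath (-(N : ℤ), 0) (i, -i) π ∧ y = (π.map w).sum} - w (i, -i)} := by
  classical
  have hwr : ∀ u : ℤ × ℤ, w (LPPAux.reflect u) = w u := by
    intro u
    rw [show LPPAux.reflect u = (-u.2, -u.1) from rfl, ← hw, Prod.mk.eta]
  set S : Set ℝ := {x : ℝ | ∃ π : List (ℤ × ℤ),
      IsUpRightPath (-(N : ℤ), 0) (0, (N : ℤ)) π ∧ x = (π.map w).sum} with hS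
  set V : ℤ → Set ℝ := fun i => {y : ℝ | ∃ π : List (ℤ × ℤ),
      IsUpRightPath (-(N : ℤ), 0) (i, -i) π ∧ y = (π.map w).sum} with hVdef
  set T : Set ℝ := {x : ℝ | ∃ i : ℤ, -(N : ℤ) ≤ i ∧ i ≤ 0 ∧
      x = 2 * sSup (V i) - w (i, -i)} with hT
  have hVfin : ∀ i : ℤ, (V i).Finite := by
    intro i
    refine ((LPPAux.finite_paths (-(N : ℤ), 0) (i, -i)).image (fun π => (π.map w).sum)).subset ?_
    rintro y ⟨π, hπ, rfl⟩
    exact ⟨π, hπ, rfl⟩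
  have hVne : ∀ i : ℤ, -(N : ℤ) ≤ i → i ≤ 0 → (V i).Nonempty := by
    intro i h1 h2
    obtain ⟨π, hπ⟩ := LPPAux.exists_path (-(N : ℤ), 0) (i, -i) (by simpa using h1) (by simp; omega)
    exact ⟨_, π, hπ, rfl⟩
  have hSfin : S.Finite := by
    refine ((LPPAux.finite_paths (-(N : ℤ), 0) (0, (N : ℤ))).image (fun π => (π.map w).sum)).subset ?_
    rintro y ⟨π, hπ, rfl⟩
    exact ⟨π, hπ, rfl⟩
  have hSne : S.Nonempty := by
    obtain ⟨π, hπ⟩ := LPPAux.exists_path (-(N : ℤ), 0) (0, (N : ℤ)) (by simp) (by simp)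
    exact ⟨_, π, hπ, rfl⟩
  have hTfin : T.Finite := by
    have : T ⊆ (fun i : ℤ => 2 * sSup (V i) - w (i, -i)) '' Set.Icc (-(N : ℤ)) 0 := by
      rintro x ⟨i, h1, h2, rfl⟩
      exact ⟨i, Set.mem_Icc.mpr ⟨h1, h2⟩, rfl⟩
    exact ((Set.finite_Icc _ _).image _).subset this
  have hTne : T.Nonempty := ⟨2 * sSup (V 0) - w (0, -0), 0, by simp, le_refl 0, rfl⟩
  apply le_antisymm
  · refine csSup_le hSne ?_
    rintro x ⟨π, hπ, rfl⟩
    obtain ⟨i, σ, τ, hi1, hi2, hσ, hτ, hsum⟩ :=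
      LPPAux.split w π (-(N : ℤ), 0) (0, (N : ℤ)) hπ (by simp) (by simp)
    have hτ' : IsUpRightPath (-(N : ℤ), 0) (i, -i) ((τ.map LPPAux.reflect).reverse) := by
      have h := LPPAux.reflect_path hτ
      rw [show LPPAux.reflect (0, (N : ℤ)) = (-(N : ℤ), 0) from by simp [LPPAux.reflect],
        show LPPAux.reflect (i, -i) = (i, -i) from by simp [LPPAux.reflect]] at h
      exact h
    have hA : (σ.map w).sum ≤ sSup (V i) :=
      le_csSup (hVfin i).bddAbove ⟨σ, hσ, rfl⟩
    have hB : (τ.map w).sum ≤ sSup (V i) := by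
      rw [← LPPAux.reflect_sum w hwr τ]
      exact le_csSup (hVfin i).bddAbove ⟨(τ.map LPPAux.reflect).reverse, hτ', rfl⟩
    have hmem : 2 * sSup (V i) - w (i, -i) ∈ T := ⟨i, by simpa using hi1, by simpa using hi2, rfl⟩
    calc (π.map w).sum = (σ.map w).sum + (τ.map w).sum - w (i, -i) := hsum
      _ ≤ 2 * sSup (V i) - w (i, -i) := by linarith
      _ ≤ sSup T := le_csSup hTfin.bddAbove hmem
  · refine csSup_le hTne ?_
    rintro x ⟨i, hi1, hi2, rfl⟩
    obtain ⟨σ, hσ, hMs⟩ := (hVne i hi1 hi2).csSup_mem (hVfin i)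
    have hτ : IsUpRightPath (i, -i) (0, (N : ℤ)) ((σ.map LPPAux.reflect).reverse) := by
      have h := LPPAux.reflect_path hσ
      rw [show LPPAux.reflect (-(N : ℤ), 0) = (0, (N : ℤ)) from by simp [LPPAux.reflect],
        show LPPAux.reflect (i, -i) = (i, -i) from by simp [LPPAux.reflect]] at h
      exact h
    obtain ⟨hπ, hsum⟩ := LPPAux.glue hσ hτ
    have hmem : (σ.map w).sum + (((σ.map LPPAux.reflect).reverse).map w).sum - w (i, -i) ∈ S :=
      ⟨_, hπ, (hsum w).symm⟩
    have := le_csSup hSfin.bddAbove hmem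
    rw [LPPAux.reflect_sum w hwr σ, ← hMs] at this
    calc 2 * sSup (V i) - w (i, -i) = sSup (V i) + sSup (V i) - w (i, -i) := by ring
      _ ≤ sSup S := this
end
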